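/- arXiv:1901.02208 — 2 statements merged into one kernel-verified Lean document; each statement's English description precedes it below -/
import Mathlib

section
/- Let μ, α > 0 and c > 0 (with c = ‖M‖). The supremum of μ a b / (p a + b) over all a, b, p > 0 satisfying b c² < 2 and p(bc² - 2) + aα < 0 equals μ / (2 c √α), attained in the limit with b = 1/c² (i.e. β = 1/2), θ → 1 and p = √(αβ/((1-β)θ c²)). -/
open Filter Topology

/-- Optimization of the maximal integral gain: the supremum of `μ a b / (p a + b)` over
`a, b, p > 0` with `b c² < 2` and `p (b c² − 2) + a α < 0` equals `μ / (2 c √α)`. -/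
theorem stmt3 (μ α c : ℝ) (hμ : 0 < μ) (hα : 0 < α) (hc : 0 < c) :
    IsLUB {x : ℝ | ∃ a b p : ℝ, 0 < a ∧ 0 < b ∧ 0 < p ∧
        b * c ^ 2 < 2 ∧ p * (b * c ^ 2 - 2) + a * α < 0 ∧
        x = μ * a * b / (p * a + b)}
      (μ / (2 * c * Real.sqrt α)) := by
  set s := Real.sqrt α with hs_def
  have hs : 0 < s := Real.sqrt_pos.mpr hα
  have hs2 : s ^ 2 = α := Real.sq_sqrt hα.le
  constructor
  · rintro x ⟨a, b, p, ha, hb, hp, hbc, hcon, rfl⟩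
    rw [← hs2] at hcon
    have ht : 0 < 2 - b * c ^ 2 := by linarith
    have hden : 0 < p * a + b := by positivity
    have hQ : 0 ≤ (2 - b * c ^ 2) * p - a * s ^ 2 := by nlinarith
    have key : 2 * c * s * (a * b) ≤ p * a + b := by
      nlinarith [sq_nonneg (a * s - c * b * (2 - b * c ^ 2)),
        mul_nonneg ha.le hQ,
        mul_nonneg (mul_nonneg ht.le hb.le) (sq_nonneg (1 - b * c ^ 2)), ht]
    rw [div_le_div_iff₀ hden (by positivity)]
    nlinarith [mul_le_mul_of_nonneg_left key hμ.le]
  · intro y hy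
    have hf : Tendsto (fun θ : ℝ => μ * θ / (c * s * (θ + 1))) (𝓝[<] (1:ℝ))
        (𝓝 (μ / (2 * c * s))) := by
      have h1 : μ * 1 / (c * s * (1 + 1)) = μ / (2 * c * s) := by ring_nf
      rw [← h1]
      refine Tendsto.mono_left ?_ nhdsWithin_le_nhds
      refine ContinuousAt.tendsto ?_
      refine ContinuousAt.div (by fun_prop) (by fun_prop) ?_
      have : (0:ℝ) < c * s * (1 + 1) := by positivity
      exact ne_of_gt this
    refine le_of_tendsto hf ?_
    filter_upwards [Ioo_mem_nhdsLT_of_mem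
      (by norm_num : (1:ℝ) ∈ Set.Ioc (0:ℝ) 1)] with θ hθ
    obtain ⟨hθ0, hθ1⟩ := hθ
    apply hy
    refine ⟨θ / (c * s), 1 / c ^ 2, s / c, by positivity, by positivity, by positivity,
      ?_, ?_, ?_⟩
    · rw [div_mul_cancel₀ _ (by positivity : (c:ℝ)^2 ≠ 0)]; norm_num
    · rw [← hs2]
      have hrw : s / c * (1 / c ^ 2 * c ^ 2 - 2) + θ / (c * s) * s ^ 2
          = (θ - 1) * s / c := by
        field_simp
        ring
      rw [hrw]
      apply div_neg_of_neg_of_pos _ hc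
      nlinarith
    · have hθ1' : θ + 1 ≠ 0 := by linarith
      field_simp
end

section
/- Let n = ℓ + (n−ℓ), K = [[K₁₁,K₁₂],[K₂₁,K₂₂]] ∈ ℝ^{n×n} with Id_n − K invertible, B = [B₁; B₂] ∈ ℝ^{n×m}, L₁, L₂ ∈ ℝ^{m×n}. Define K₊ = [[Id_ℓ, 0],[K₂₁, K₂₂]], K₋ = [[K₁₁, K₁₂],[0, Id_{n−ℓ}]], and assume K₋ − K₊ is invertible. Then −L₁B + (L₁K + L₂)(K₋ − K₊)⁻¹ [B₁; −B₂] = −(L₁ + L₂)(Id_n − K)⁻¹ B. In particular T₂ = −T₁ where T₁ = (L₁+L₂)(Id_n−K)⁻¹B. -/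
/-!
With `E = diag(-Id, Id)` one has `K₋ − K₊ = E (Id − K)` and `E [B₁; −B₂] = −B`, and `E` is its own
inverse, so `(K₋ − K₊)⁻¹ [B₁; −B₂] = −(Id − K)⁻¹ B`. The claim then reduces to
`(L₁K + L₂)(Id − K)⁻¹ + L₁ = (L₁ + L₂)(Id − K)⁻¹`, obtained by writing `L₁ = L₁(Id − K)(Id − K)⁻¹`.
-/

namespace Matrix

variable {R : Type*} {l n p m : Type*}

theorem fromBlocks_sub_fromBlocks_eq_mul_one_sub [Ring R] [Fintype l] [Fintype n]
    [DecidableEq l] [DecidableEq n]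
    (K11 : Matrix l l R) (K12 : Matrix l n R) (K21 : Matrix n l R) (K22 : Matrix n n R) :
    fromBlocks K11 K12 0 1 - fromBlocks 1 0 K21 K22
      = fromBlocks (-1) 0 0 1 * (1 - fromBlocks K11 K12 K21 K22) := by
  simp only [sub_eq_add_neg, ← fromBlocks_one, fromBlocks_neg, fromBlocks_add, fromBlocks_multiply]
  simp

theorem inv_fromBlocks_neg_one_zero_zero_one [CommRing R] [Fintype l] [Fintype n]
    [DecidableEq l] [DecidableEq n] :
    (fromBlocks (-1) 0 0 1 : Matrix (l ⊕ n) (l ⊕ n) R)⁻¹ = fromBlocks (-1) 0 0 1 :=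
  inv_eq_left_inv <| by simp [fromBlocks_multiply, fromBlocks_one]

theorem fromBlocks_neg_one_zero_zero_one_mul_fromRows_neg [Ring R] [Fintype l] [Fintype n]
    [DecidableEq l] [DecidableEq n] (B1 : Matrix l p R) (B2 : Matrix n p R) :
    (fromBlocks (-1) 0 0 1 : Matrix (l ⊕ n) (l ⊕ n) R) * fromRows B1 (-B2) = -fromRows B1 B2 := by
  simp [fromBlocks_mul_fromRows, fromRows_neg]

theorem mul_add_mul_inv_one_sub [CommRing R] [Fintype n] [DecidableEq n]
    (L1 L2 : Matrix m n R) (K : Matrix n n R) (hK : IsUnit (1 - K).det) :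
    (L1 * K + L2) * (1 - K)⁻¹ + L1 = (L1 + L2) * (1 - K)⁻¹ :=
  calc (L1 * K + L2) * (1 - K)⁻¹ + L1
      = (L1 * K + L2) * (1 - K)⁻¹ + L1 * (1 - K) * (1 - K)⁻¹ := by
        rw [Matrix.mul_assoc, mul_nonsing_inv _ hK, Matrix.mul_one]
    _ = (L1 + L2) * (1 - K)⁻¹ := by
        rw [← Matrix.add_mul, Matrix.mul_sub, Matrix.mul_one]; congr 1; abel

end Matrix

open Matrix in
theorem stmt8_general (ℓ k m : ℕ)
    (K11 : Matrix (Fin ℓ) (Fin ℓ) ℝ) (K12 : Matrix (Fin ℓ) (Fin k) ℝ)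
    (K21 : Matrix (Fin k) (Fin ℓ) ℝ) (K22 : Matrix (Fin k) (Fin k) ℝ)
    (B1 : Matrix (Fin ℓ) (Fin m) ℝ) (B2 : Matrix (Fin k) (Fin m) ℝ)
    (L1 L2 : Matrix (Fin m) (Fin ℓ ⊕ Fin k) ℝ)
    (hK : IsUnit (1 - Matrix.fromBlocks K11 K12 K21 K22).det) :
    -L1 * Matrix.fromRows B1 B2
      + (L1 * Matrix.fromBlocks K11 K12 K21 K22 + L2)
        * (Matrix.fromBlocks K11 K12 0 1 - Matrix.fromBlocks 1 0 K21 K22)⁻¹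
        * Matrix.fromRows B1 (-B2)
    = -(L1 + L2) * (1 - Matrix.fromBlocks K11 K12 K21 K22)⁻¹ * Matrix.fromRows B1 B2 := by
  rw [fromBlocks_sub_fromBlocks_eq_mul_one_sub, Matrix.mul_inv_rev,
    inv_fromBlocks_neg_one_zero_zero_one, Matrix.mul_assoc _ _ (fromRows B1 (-B2)),
    Matrix.mul_assoc _ (fromBlocks _ _ _ _),
    fromBlocks_neg_one_zero_zero_one_mul_fromRows_neg, Matrix.neg_mul (L1 + L2),
    ← mul_add_mul_inv_one_sub L1 L2 _ hK]
  simp only [Matrix.mul_neg, Matrix.neg_mul, Matrix.add_mul, Matrix.mul_assoc]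
  abel

/-- In the constant-coefficient case the two rank conditions coincide:
`−L₁B + (L₁K + L₂)(K₋ − K₊)⁻¹ [B₁; −B₂] = −(L₁ + L₂)(Id − K)⁻¹ B`, i.e. `T₂ = −T₁`. -/
theorem stmt8 (ℓ k m : ℕ)
    (K11 : Matrix (Fin ℓ) (Fin ℓ) ℝ) (K12 : Matrix (Fin ℓ) (Fin k) ℝ)
    (K21 : Matrix (Fin k) (Fin ℓ) ℝ) (K22 : Matrix (Fin k) (Fin k) ℝ)
    (B1 : Matrix (Fin ℓ) (Fin m) ℝ) (B2 : Matrix (Fin k) (Fin m) ℝ)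
    (L1 L2 : Matrix (Fin m) (Fin ℓ ⊕ Fin k) ℝ)
    (hK : IsUnit (1 - Matrix.fromBlocks K11 K12 K21 K22).det)
    (hKpm : IsUnit (Matrix.fromBlocks K11 K12 0 1 - Matrix.fromBlocks 1 0 K21 K22).det) :
    -L1 * Matrix.fromRows B1 B2
      + (L1 * Matrix.fromBlocks K11 K12 K21 K22 + L2)
        * (Matrix.fromBlocks K11 K12 0 1 - Matrix.fromBlocks 1 0 K21 K22)⁻¹
        * Matrix.fromRows B1 (-B2)
    = -(L1 + L2) * (1 - Matrix.fromBlocks K11 K12 K21 K22)⁻¹ * Matrix.fromRows B1 B2 :=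
  stmt8_general ℓ k m K11 K12 K21 K22 B1 B2 L1 L2 hK
end
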